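/- arXiv:1604.05902 — 3 statements merged into one kernel-verified Lean document; each statement's English description precedes it below -/
import Mathlib

section
/- Let p be a prime and let G be a finite non-abelian p-group that is (p + 2)-centralizer, i.e., the set {C_G(x) : x ∈ G} of centralizers of elements of G has exactly p + 2 members. Then the characteristic polynomial of the adjacency matrix of the commuting graph Γ_G (over the reals) equals (X + 1)^((p² − 1)·|Z(G)| − p − 1) · (X − ((p − 1)·|Z(G)| − 1))^(p + 1); in particular G is commuting integral. -/
open Polynomial

/-- The commuting graph of a group `G`: vertices are the non-central elements,
two distinct vertices are adjacent iff they commute. -/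
def commutingGraph (G : Type*) [Group G] : SimpleGraph {x : G // x ∉ Subgroup.center G} where
  Adj x y := x ≠ y ∧ (x : G) * y = (y : G) * x
  symm := ⟨by rintro x y ⟨hne, hc⟩; exact ⟨hne.symm, hc.symm⟩⟩
  loopless := ⟨by rintro x ⟨hne, _⟩; exact hne rfl⟩

open scoped Classical in
/-- The characteristic polynomial (over `ℝ`) of the adjacency matrix of the
commuting graph of `G`. -/
noncomputable def commCharpoly (G : Type*) [Group G] [Fintype G] : Polynomial ℝ :=
  ((commutingGraph G).adjMatrix ℝ).charpoly

/-!
Let `Z = Z(G)`. Take `y` of order `p` modulo `Z` and `x` not commuting with `y`. The `p + 1`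
elements `y, x, xy, …, xy^(p-1)` pairwise do not commute: if `xy^k` and `xy^l` commuted, `xy^k`
would commute with `y^(l-k)` and with the central `y^p`, hence with `y`. So their centralizers
`H_i` together with `G` are all `p + 2` centralizers, and every non-central `w` lies in exactly one
`H_i`, namely `C(w)`. Thus the sets `H_i \ Z` partition `G \ Z`, and `H_i ∩ H_j = Z` gives
`|H_i| |H_j| ≤ |G| |Z|`; for powers of `p` this forces `|H_i| = p |Z|` and `|G| = p² |Z|`.
Hence `Γ_G` is the disjoint union of `p + 1` cliques of size `(p - 1) |Z|`. Its adjacency matrix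
is `U Uᵀ - 1` for the incidence matrix `U` of the cliques, and `Uᵀ U = (p - 1) |Z| • 1`.
-/

theorem SimpleGraph.charpoly_adjMatrix_of_adj_iff_fiber {V K R : Type*} [Fintype V] [DecidableEq V]
    [Fintype K] [DecidableEq K] [CommRing R] (Γ : SimpleGraph V) [DecidableRel Γ.Adj]
    (f : V → K) {n : ℕ} (hn : 0 < n) (hfib : ∀ k, Fintype.card {v // f v = k} = n)
    (hadj : ∀ v w, Γ.Adj v w ↔ v ≠ w ∧ f v = f w) :
    (Γ.adjMatrix R).charpoly =
      (X + 1) ^ (Fintype.card V - Fintype.card K) * (X - C ((n : R) - 1)) ^ Fintype.card K := by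
  let U : Matrix V K R := Matrix.of fun v k => if f v = k then 1 else 0
  have hA : Γ.adjMatrix R = U * U.transpose - Matrix.scalar V (1 : R) := by
    ext v w
    by_cases hvw : v = w
    · subst hvw
      simp [U, Matrix.mul_apply]
    · simp [U, Matrix.mul_apply, hadj, hvw]
  have hU : U.transpose * U = (n : Matrix K K R) := by
    ext k l
    by_cases hkl : k = l
    · subst hkl
      simp [U, Matrix.mul_apply, ← hfib k, Fintype.card_subtype, ← ite_and, Finset.sum_boole,
        Matrix.natCast_apply]
    · rw [Matrix.natCast_apply, if_neg hkl, Nat.cast_zero, Matrix.mul_apply]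
      refine Finset.sum_eq_zero fun v _ => ?_
      by_cases hv : f v = k <;> simp [U, hv, hkl]
  have hsurj : Function.Surjective f := fun k => by
    obtain ⟨⟨v, hv⟩⟩ := Fintype.card_pos_iff.mp ((hfib k).symm ▸ hn)
    exact ⟨v, hv⟩
  rw [hA, Matrix.charpoly_sub_scalar, Matrix.charpoly_mul_comm_of_le _ _
    (Fintype.card_le_of_surjective f hsurj), hU, Matrix.charpoly_natCast]
  simp only [mul_comp, pow_comp, X_comp, sub_comp, natCast_comp, C_1]
  rw [map_sub, map_natCast, map_one, sub_sub_eq_add_sub, add_sub_right_comm]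

section Group

open Subgroup

variable {G : Type*} [Group G]

theorem Subgroup.mem_of_pow_mem_of_coprime {H : Subgroup G} {y : G} {m n : ℕ} (hm : y ^ m ∈ H)
    (hn : y ^ n ∈ H) (hmn : m.Coprime n) : y ∈ H := by
  have hy : (y ^ m) ^ m.gcdA n * (y ^ n) ^ m.gcdB n = y := by
    rw [← zpow_natCast, ← zpow_natCast, ← zpow_mul, ← zpow_mul, ← zpow_add, ← Nat.gcd_eq_gcd_ab,
      hmn.gcd_eq_one, Nat.cast_one, zpow_one]
  exact hy ▸ H.mul_mem (H.zpow_mem hm _) (H.zpow_mem hn _)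

theorem exists_pairwise_not_commute_of_pow_mem_center {p : ℕ} (hp : p.Prime) {x y : G}
    (hxy : ¬Commute x y) (hy : y ^ p ∈ center G) :
    ∃ e : Option (Fin p) → G, Pairwise fun i j => ¬Commute (e i) (e j) := by
  have hyy : ∀ k : ℕ, y ^ k ∈ centralizer {y} := fun k =>
    pow_mem (mem_centralizer_singleton_iff.mpr rfl) k
  have hx : ∀ k : ℕ, ¬Commute (x * y ^ k) y := fun k h =>
    hxy <| mem_centralizer_singleton_iff.mp <|
      ((centralizer {y}).mul_mem_cancel_right (hyy k)).mp (mem_centralizer_singleton_iff.mpr h)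
  have hxx : ∀ k l : ℕ, k < l → l < p → ¬Commute (x * y ^ k) (x * y ^ l) := by
    intro k l hkl hlp h
    set a := x * y ^ k
    have hl : x * y ^ l = a * y ^ (l - k) := by
      rw [mul_assoc, ← pow_add, Nat.add_sub_cancel' hkl.le]
    have hlk : y ^ (l - k) ∈ centralizer {a} :=
      ((centralizer {a}).mul_mem_cancel_left (mem_centralizer_singleton_iff.mpr rfl)).mp
        (mem_centralizer_singleton_iff.mpr (hl ▸ h.symm))
    have hcop : (l - k).Coprime p :=
      ((hp.coprime_iff_not_dvd).mpr (Nat.not_dvd_of_pos_of_lt (by omega) (by omega))).symm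
    exact hx k (mem_centralizer_singleton_iff.mp
      (mem_of_pow_mem_of_coprime hlk (center_le_centralizer _ hy) hcop)).symm
  refine ⟨fun i => i.elim y fun k => x * y ^ (k : ℕ), ?_⟩
  rintro (_ | k) (_ | l) hne
  · exact absurd rfl hne
  · exact fun h => hx l h.symm
  · exact hx k
  · have hkl : (k : ℕ) ≠ l := fun h => hne (congrArg some (Fin.ext h))
    rcases hkl.lt_or_gt with h | h
    · exact hxx k l h l.isLt
    · exact fun hc => hxx l k h k.isLt hc.symm

theorem IsPGroup.exists_pairwise_not_commute [Finite G] {p : ℕ} (hp : p.Prime) (hG : IsPGroup p G)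
    (hna : ∃ a b : G, a * b ≠ b * a) :
    ∃ e : Option (Fin p) → G, Pairwise fun i j => ¬Commute (e i) (e j) := by
  have : Fact p.Prime := ⟨hp⟩
  obtain ⟨a, b, hab⟩ := hna
  have hZ : (center G).index ≠ 1 := fun h =>
    hab (mem_center_iff.mp ((index_eq_one.mp h).symm ▸ mem_top b) a)
  rw [index_eq_card] at hZ
  obtain ⟨q, hq⟩ := exists_prime_orderOf_dvd_card' p
    ((hG.to_quotient (center G)).card_eq_or_dvd.resolve_left hZ)
  obtain ⟨y, rfl⟩ := QuotientGroup.mk_surjective q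
  have hy : y ∉ center G := fun h => hp.one_lt.ne' <| by
    rw [← hq, (QuotientGroup.eq_one_iff y).mpr h, orderOf_one]
  have hyp : y ^ p ∈ center G := by
    rw [← QuotientGroup.eq_one_iff, QuotientGroup.mk_pow, ← hq, pow_orderOf_eq_one]
  obtain ⟨x, hxy⟩ : ∃ x, ¬Commute x y := by
    by_contra! h
    exact hy (mem_center_iff.mpr fun x => h x)
  exact exists_pairwise_not_commute_of_pow_mem_center hp hxy hyp

open Finset in
theorem exponents_eq_of_sum_pow_eq {ι : Type*} [Fintype ι] {p t u : ℕ} {s : ι → ℕ}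
    (hp : p.Prime) (hι : Fintype.card ι = p + 1) (hts : ∀ i, t < s i) (hsu : ∀ i, s i < u)
    (hpair : ∀ i j, i ≠ j → s i + s j ≤ u + t) (hsum : ∑ i, p ^ s i = p ^ u + p ^ (t + 1)) :
    (∀ i, s i = t + 1) ∧ u = t + 2 := by
  -- If some `s i ≥ t + 2`, all other exponents are `≤ u - 2`, so the sum is `≤ 2 p^(u-1) ≤ p^u`.
  have hs : ∀ i, s i = t + 1 := by
    classical
    intro i
    by_contra hne
    have hi : t + 2 ≤ s i := by have := hts i; omega
    have hu : 3 ≤ u := by have := hsu i; omega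
    have hother : ∀ j ∈ univ.erase i, p ^ s j ≤ p ^ (u - 2) := fun j hj =>
      Nat.pow_le_pow_right hp.pos (by have := hpair i j (ne_of_mem_erase hj).symm; omega)
    have hrest : ∑ j ∈ univ.erase i, p ^ s j ≤ p * p ^ (u - 2) := by
      simpa [card_erase_of_mem, hι] using sum_le_card_nsmul _ _ _ hother
    have : p ^ u + p ^ (t + 1) ≤ p ^ u := by
      calc p ^ u + p ^ (t + 1) = p ^ s i + ∑ j ∈ univ.erase i, p ^ s j := by
            rw [add_sum_erase _ (fun j => p ^ s j) (mem_univ i), hsum]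
        _ ≤ p ^ (u - 1) + p * p ^ (u - 2) :=
            add_le_add (Nat.pow_le_pow_right hp.pos (by have := hsu i; omega)) hrest
        _ = 2 * p ^ (u - 1) := by rw [← pow_succ', show u - 2 + 1 = u - 1 by omega]; ring
        _ ≤ p * p ^ (u - 1) := Nat.mul_le_mul_right _ hp.two_le
        _ = p ^ u := by rw [← pow_succ', Nat.sub_add_cancel (by omega)]
    have := pow_pos hp.pos (t + 1)
    omega
  refine ⟨hs, Nat.pow_right_injective hp.two_le (show p ^ u = p ^ (t + 2) from ?_)⟩
  simp only [hs, sum_const, card_univ, hι, smul_eq_mul] at hsum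
  rw [pow_succ' p (t + 1)]
  linarith

theorem Subgroup.card_mul_card_le_card_mul_card_inf [Finite G] (H K : Subgroup G) :
    Nat.card H * Nat.card K ≤ Nat.card G * Nat.card ↥(H ⊓ K) := by
  have hg : 0 < Nat.card G := Nat.card_pos
  refine Nat.le_of_mul_le_mul_right ?_ hg
  calc Nat.card H * Nat.card K * Nat.card G
      = Nat.card H * Nat.card K * (Nat.card ↥(H ⊓ K) * (H ⊓ K).index) := by rw [card_mul_index]
    _ ≤ Nat.card H * Nat.card K * (Nat.card ↥(H ⊓ K) * (H.index * K.index)) := by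
        gcongr; exact index_inf_le
    _ = (Nat.card H * H.index) * (Nat.card K * K.index) * Nat.card ↥(H ⊓ K) := by ring
    _ = Nat.card G * Nat.card ↥(H ⊓ K) * Nat.card G := by rw [card_mul_index, card_mul_index]; ring

theorem Subgroup.card_lt_card_of_lt [Finite G] {H K : Subgroup G} (h : H < K) :
    Nat.card H < Nat.card K :=
  (card_le_of_le h.le).lt_of_ne fun heq => h.ne (eq_of_le_of_card_ge h.le heq.ge)

theorem Subgroup.card_subtype_notMem [Finite G] (H : Subgroup G) :
    Nat.card {x : G // x ∉ H} = Nat.card G - Nat.card H :=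
  (Nat.card_coe_set_eq (H : Set G)ᶜ).trans (Set.ncard_compl _)

theorem Subgroup.card_subtype_mem_of_notMem [Finite G] {H K : Subgroup G} (hHK : H ≤ K) :
    Nat.card {v : {x : G // x ∉ H} // (v : G) ∈ K} = Nat.card K - Nat.card H := by
  rw [Nat.card_congr ((Equiv.subtypeSubtypeEquivSubtypeInter _ _).trans
    (Equiv.subtypeEquivRight fun x => and_comm))]
  exact (Nat.card_coe_set_eq ((K : Set G) \ H)).trans (Set.ncard_sdiff hHK)

theorem IsPGroup.card_eq_of_partition [Finite G] {p : ℕ} (hp : p.Prime) (hG : IsPGroup p G)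
    {ι : Type*} [Fintype ι] (hι : Fintype.card ι = p + 1) {H : ι → Subgroup G} {Z : Subgroup G}
    (hZH : ∀ i, Z < H i) (hH : ∀ i, H i < ⊤) (hinf : ∀ i j, i ≠ j → H i ⊓ H j ≤ Z)
    (hsum : ∑ i, (Nat.card (H i) - Nat.card Z) = Nat.card G - Nat.card Z) :
    (∀ i, Nat.card (H i) = p * Nat.card Z) ∧ Nat.card G = p ^ 2 * Nat.card Z := by
  have : Fact p.Prime := ⟨hp⟩
  obtain ⟨u, hu⟩ := hG.exists_card_eq
  obtain ⟨t, ht⟩ := (hG.to_subgroup Z).exists_card_eq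
  choose s hs using fun i => (hG.to_subgroup (H i)).exists_card_eq
  have hts : ∀ i, t < s i := fun i => by
    rw [← pow_lt_pow_iff_right₀ hp.one_lt, ← ht, ← hs]
    exact card_lt_card_of_lt (hZH i)
  have hsu : ∀ i, s i < u := fun i => by
    rw [← pow_lt_pow_iff_right₀ hp.one_lt, ← hu, ← hs, ← card_top (G := G)]
    exact card_lt_card_of_lt (hH i)
  have hpair : ∀ i j, i ≠ j → s i + s j ≤ u + t := fun i j hij => by
    rw [← pow_le_pow_iff_right₀ hp.one_lt, pow_add, pow_add, ← ht, ← hu, ← hs, ← hs]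
    exact (card_mul_card_le_card_mul_card_inf (H i) (H j)).trans
      (Nat.mul_le_mul_left _ (card_le_of_le (hinf i j hij)))
  have hsum' : ∑ i, p ^ s i = p ^ u + p ^ (t + 1) := by
    have hle : ∀ i ∈ Finset.univ, p ^ t ≤ p ^ s i := fun i _ =>
      Nat.pow_le_pow_right hp.pos (hts i).le
    obtain ⟨i⟩ : Nonempty ι := Fintype.card_pos_iff.mp (hι ▸ Nat.succ_pos p)
    have htu : p ^ t ≤ p ^ u := Nat.pow_le_pow_right hp.pos ((hts i).trans (hsu i)).le
    have hsle := Finset.sum_le_sum hle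
    simp only [hs, ht, hu, Finset.sum_tsub_distrib _ hle, Finset.sum_const, Finset.card_univ, hι,
      smul_eq_mul, add_mul, one_mul] at hsum hsle
    rw [pow_succ, mul_comm]
    omega
  obtain ⟨hs1, hu2⟩ := exponents_eq_of_sum_pow_eq hp hι hts hsu hpair hsum'
  exact ⟨fun i => by rw [hs, ht, hs1, pow_succ'], by rw [hu, ht, hu2, pow_add, mul_comm]⟩

section PairwiseNotCommute

variable {ι : Type*} {e : ι → G}

theorem centralizer_injective_of_pairwise_not_commute
    (he : Pairwise fun i j => ¬Commute (e i) (e j)) :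
    Function.Injective fun i => centralizer {e i} := by
  intro i j (hij : centralizer {e i} = centralizer {e j})
  by_contra hne
  have : e i ∈ centralizer {e j} := hij ▸ mem_centralizer_singleton_iff.mpr rfl
  exact he hne (mem_centralizer_singleton_iff.mp this)

theorem centralizer_ne_top_of_pairwise_not_commute [Nontrivial ι]
    (he : Pairwise fun i j => ¬Commute (e i) (e j)) (i : ι) : centralizer {e i} ≠ ⊤ := by
  obtain ⟨j, hji⟩ := exists_ne i
  intro htop
  exact he hji (mem_centralizer_singleton_iff.mp (htop ▸ mem_top (e j)))

theorem exists_centralizer_eq_of_card_range [Finite ι] [Nontrivial ι]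
    (he : Pairwise fun i j => ¬Commute (e i) (e j))
    (hcard : Nat.card (Set.range fun x : G => centralizer {x}) = Nat.card ι + 1)
    {w : G} (hw : w ∉ center G) : ∃ i, centralizer {w} = centralizer {e i} := by
  set T := insert ⊤ (Set.range fun i => centralizer {e i})
  have hTsub : T ⊆ Set.range fun x : G => centralizer {x} := by
    rintro _ (rfl | ⟨i, rfl⟩)
    · exact ⟨1, centralizer_eq_top_iff_subset.mpr (Set.singleton_subset_iff.mpr (one_mem _))⟩
    · exact ⟨e i, rfl⟩
  have hT : T.ncard = Nat.card ι + 1 := by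
    rw [Set.ncard_insert_of_notMem, Set.ncard_range_of_injective
      (centralizer_injective_of_pairwise_not_commute he)]
    · rintro ⟨i, hi⟩
      exact centralizer_ne_top_of_pairwise_not_commute he i hi
  have hrange : T = Set.range fun x : G => centralizer {x} := by
    rw [Nat.card_coe_set_eq] at hcard
    exact Set.eq_of_subset_of_ncard_le hTsub (by rw [hcard, hT])
      (Set.finite_of_ncard_ne_zero (by omega))
  obtain htop | hi := hrange ▸ Set.mem_range_self (f := fun x : G => centralizer {x}) w
  · exact absurd (centralizer_eq_top_iff_subset.mp htop rfl) hw
  · exact hi.imp fun _ => Eq.symm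

theorem mem_centralizer_iff_centralizer_eq (he : Pairwise fun i j => ¬Commute (e i) (e j))
    (hcover : ∀ w ∉ center G, ∃ i, centralizer {w} = centralizer {e i})
    {w : G} (hw : w ∉ center G) {i : ι} :
    w ∈ centralizer {e i} ↔ centralizer {w} = centralizer {e i} := by
  refine ⟨fun hwi => ?_, fun h => h ▸ mem_centralizer_singleton_iff.mpr rfl⟩
  obtain ⟨j, hj⟩ := hcover w hw
  have : e i ∈ centralizer {e j} :=
    hj ▸ mem_centralizer_singleton_iff.mpr (mem_centralizer_singleton_iff.mp hwi).symm
  obtain rfl : i = j := by_contra fun hne => he hne (mem_centralizer_singleton_iff.mp this)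
  exact hj

end PairwiseNotCommute

theorem IsPGroup.exists_commute_iff_of_card_centralizers [Finite G] {p : ℕ} (hp : p.Prime)
    (hG : IsPGroup p G) (hna : ∃ a b : G, a * b ≠ b * a)
    (hcent : Nat.card (Set.range fun x : G => centralizer ({x} : Set G)) = p + 2) :
    ∃ f : {x : G // x ∉ center G} → Option (Fin p),
      (∀ v w : {x : G // x ∉ center G}, Commute (v : G) w ↔ f v = f w) ∧
      (∀ i, Nat.card {v // f v = i} = (p - 1) * Nat.card (center G)) ∧
      Nat.card G = p ^ 2 * Nat.card (center G) := by
  have : NeZero p := ⟨hp.ne_zero⟩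
  obtain ⟨e, he⟩ := hG.exists_pairwise_not_commute hp hna
  have hcover : ∀ w ∉ center G, ∃ i, centralizer {w} = centralizer {e i} := fun w hw =>
    exists_centralizer_eq_of_card_range he (by simpa using hcent) hw
  choose f hf using fun v : {x : G // x ∉ center G} => hcover v v.2
  have hfib : ∀ v i, f v = i ↔ (v : G) ∈ centralizer {e i} := fun v i => by
    rw [mem_centralizer_iff_centralizer_eq he hcover v.2, hf v]
    exact (centralizer_injective_of_pairwise_not_commute he).eq_iff.symm
  have hfiber : ∀ i, Nat.card {v // f v = i} =
      Nat.card (centralizer {e i}) - Nat.card (center G) := fun i => by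
    rw [Nat.card_congr (Equiv.subtypeEquivRight fun v => hfib v i),
      card_subtype_mem_of_notMem (center_le_centralizer _)]
  have hnoncentral : ∀ i, e i ∉ center G := fun i h =>
    centralizer_ne_top_of_pairwise_not_commute he i
      (centralizer_eq_top_iff_subset.mpr (Set.singleton_subset_iff.mpr h))
  obtain ⟨hC, hcard⟩ := hG.card_eq_of_partition hp (by simp)
    (H := fun i => centralizer {e i}) (Z := center G)
    (fun i => SetLike.lt_iff_le_and_exists.mpr ⟨center_le_centralizer _, e i,
      mem_centralizer_singleton_iff.mpr rfl, hnoncentral i⟩)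
    (fun i => lt_top_iff_ne_top.mpr (centralizer_ne_top_of_pairwise_not_commute he i))
    (fun i j hij w hw => by_contra fun hwZ =>
      hij (((hfib ⟨w, hwZ⟩ i).mpr hw.1).symm.trans ((hfib ⟨w, hwZ⟩ j).mpr hw.2)))
    (by rw [← card_subtype_notMem, ← Nat.card_congr (Equiv.sigmaFiberEquiv f), Nat.card_sigma]
        exact Fintype.sum_congr _ _ fun i => (hfiber i).symm)
  refine ⟨f, fun v w => ?_, fun i => by rw [hfiber, hC, Nat.sub_one_mul], hcard⟩
  rw [eq_comm, hfib, ← hf v]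
  exact ⟨fun h => mem_centralizer_singleton_iff.mpr h.symm,
    fun h => (mem_centralizer_singleton_iff.mp h).symm⟩

end Group

theorem commuting_integral_of_p_add_two_centralizer_p_group
    (p : ℕ) (hp : p.Prime) (G : Type*) [Group G] [Fintype G]
    (hpgroup : IsPGroup p G)
    (hna : ∃ a b : G, a * b ≠ b * a)
    (hcent : Nat.card (Set.range fun x : G => Subgroup.centralizer ({x} : Set G)) = p + 2) :
    commCharpoly G =
        (X + 1) ^ ((p ^ 2 - 1) * Nat.card (Subgroup.center G) - p - 1) *
          (X - C (((p : ℝ) - 1) * Nat.card (Subgroup.center G) - 1)) ^ (p + 1) ∧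
      ∀ μ : ℝ, (commCharpoly G).IsRoot μ → ∃ k : ℤ, μ = (k : ℝ) := by
  classical
  obtain ⟨f, hcomm, hfib, hcard⟩ := hpgroup.exists_commute_iff_of_card_centralizers hp hna hcent
  set z := Nat.card (Subgroup.center G)
  have hV : Fintype.card {x : G // x ∉ Subgroup.center G} = (p ^ 2 - 1) * z := by
    rw [← Nat.card_eq_fintype_card, Subgroup.card_subtype_notMem, hcard, Nat.sub_one_mul]
  have hchar : commCharpoly G = (X + 1) ^ ((p ^ 2 - 1) * z - p - 1) *
      (X - C (((p : ℝ) - 1) * z - 1)) ^ (p + 1) := by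
    rw [commCharpoly, (commutingGraph G).charpoly_adjMatrix_of_adj_iff_fiber f
      (Nat.mul_pos (Nat.sub_pos_of_lt hp.one_lt) Nat.card_pos)
      (fun i => by rw [← Nat.card_eq_fintype_card, hfib]) (fun v w => and_congr_right' (hcomm v w)),
      hV, Fintype.card_option, Fintype.card_fin, Nat.sub_sub, Nat.cast_mul, Nat.cast_pred hp.pos]
  refine ⟨hchar, fun μ hμ => ?_⟩
  rw [hchar] at hμ
  simp only [IsRoot, eval_mul, eval_pow, eval_add, eval_sub, eval_X, eval_one, eval_C, mul_eq_zero,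
    pow_eq_zero_iff', ne_eq] at hμ
  rcases hμ with ⟨hμ, -⟩ | ⟨hμ, -⟩
  · exact ⟨-1, by push_cast; linarith⟩
  · exact ⟨((p : ℤ) - 1) * z - 1, by push_cast; linarith⟩
end

section
/- Let m ≥ 2 and let G be a finite group whose central quotient G/Z(G) is isomorphic to the dihedral group D_{2m} of order 2m, and let n = |Z(G)|. Then the characteristic polynomial of the adjacency matrix of the commuting graph Γ_G (over the reals) equals (X + 1)^((2m − 1)·n − m − 1) · (X − (n − 1))^m · (X − ((m − 1)·n − 1)); in particular all eigenvalues of Γ_G are integers. -/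
open Polynomial

/-!
Write `f : G → D_{2m}` for the quotient map, whose kernel is the center. Two non-central elements
commute exactly when their images are both rotations or are the same reflection: elements over
rotations are powers of a lift of `r 1` times central elements, and an element over a rotation that
commutes with some element over a reflection commutes with all of `G`. So `Γ_G` is the disjoint
union of one clique of size `(m - 1) n` and `m` cliques of size `n`, and the clique `K_k` has
characteristic polynomial `(X + 1)^(k - 1) (X - (k - 1))`, since `A(K_k) + 1` is the all-ones matrix.
-/

open Matrix DihedralGroup

namespace SimpleGraph

variable {R V : Type*} [CommRing R] [Fintype V] [DecidableEq V]

theorem charpoly_adjMatrix_completeGraph [Nonempty V] :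
    ((completeGraph V).adjMatrix R).charpoly =
      (X + 1) ^ (Fintype.card V - 1) * (X - C ((Fintype.card V : R) - 1)) := by
  have hJ : (completeGraph V).adjMatrix R = vecMulVec 1 1 - scalar V 1 := by
    rw [adjMatrix_completeGraph_eq_of_one_sub_one]
    ext i j
    simp [vecMulVec]
  obtain ⟨k, hk⟩ : ∃ k, Fintype.card V = k + 1 :=
    Nat.exists_eq_succ_of_ne_zero Fintype.card_ne_zero
  rw [hJ, charpoly_sub_scalar, charpoly_vecMulVec]
  simp [pow_succ, dotProduct, smul_eq_C_mul, hk]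
  ring

theorem charpoly_adjMatrix_of_adj_iff {α : Type*} [DecidableEq α] (Γ : SimpleGraph V)
    [DecidableRel Γ.Adj] (b : V → α) (hΓ : ∀ v w, Γ.Adj v w ↔ v ≠ w ∧ b v = b w) :
    (Γ.adjMatrix R).charpoly = ∏ a ∈ Finset.univ.image b,
      (X + 1) ^ (Nat.card {v // b v = a} - 1) * (X - C ((Nat.card {v // b v = a} : R) - 1)) := by
  -- Γ is a disjoint union of cliques, so any order on the labels makes its matrix block triangular.
  let _ : LinearOrder α := IsWellOrder.linearOrder WellOrderingRel
  have hblock (a : α) :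
      (Γ.adjMatrix R).toSquareBlock b a = (completeGraph {v // b v = a}).adjMatrix R := by
    ext v w
    simp [toSquareBlock_def, hΓ, v.2, w.2, Subtype.ext_iff]
  have htri : (Γ.adjMatrix R).BlockTriangular b := fun v w hlt ↦ by simp [hΓ, hlt.ne']
  rw [htri.charpoly]
  refine Finset.prod_congr (by congr!) fun a ha ↦ ?_
  obtain ⟨v, -, rfl⟩ := Finset.mem_image.mp ha
  rw [hblock, Nat.card_eq_fintype_card]
  convert charpoly_adjMatrix_completeGraph
  exact ⟨⟨v, rfl⟩⟩

end SimpleGraph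

namespace DihedralGroup

variable {m : ℕ}

def reflectionIndex : DihedralGroup m → Option (ZMod m)
  | r _ => none
  | sr i => some i

theorem card_setOf_ne_one_reflectionIndex_eq_none [NeZero m] :
    Nat.card {d : DihedralGroup m | d ≠ 1 ∧ reflectionIndex d = none} = m - 1 := by
  have hset : {d : DihedralGroup m | d ≠ 1 ∧ reflectionIndex d = none} = r '' {i | i ≠ 0} := by
    ext (_ | _) <;> simp [reflectionIndex, one_def, -r_zero]
  rw [hset, Nat.card_image_of_injective (fun _ _ ↦ r.inj)]
  simp [Nat.card_eq_fintype_card, Finset.filter_ne']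

theorem card_setOf_ne_one_reflectionIndex_eq_some (i : ZMod m) :
    Nat.card {d : DihedralGroup m | d ≠ 1 ∧ reflectionIndex d = some i} = 1 := by
  have hset : {d : DihedralGroup m | d ≠ 1 ∧ reflectionIndex d = some i} = {sr i} := by
    ext (_ | _) <;> simp [reflectionIndex, one_def, -r_zero]
  rw [hset, Nat.card_unique]

variable {G : Type*} [Group G] {f : G →* DihedralGroup m}

section

variable (hker : f.ker ≤ Subgroup.center G)
include hker

theorem commute_of_commute_of_map_eq {w x y : G} (hwx : Commute w x) (hxy : f x = f y) :
    Commute w y := by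
  have hz : x⁻¹ * y ∈ Subgroup.center G := hker (by simp [hxy])
  simpa using hwx.mul_right (Subgroup.mem_center_iff.mp hz w)

theorem commute_of_map_eq {x y : G} (hxy : f x = f y) : Commute x y :=
  commute_of_commute_of_map_eq hker (Commute.refl x) hxy

theorem commute_of_map_eq_r (hsurj : Function.Surjective f) {x y : G} {i j : ZMod m}
    (hx : f x = r i) (hy : f y = r j) : Commute x y := by
  obtain ⟨g, hg⟩ := hsurj (r 1)
  have hpow (k : ZMod m) : f (g ^ (k.cast : ℤ)) = r k := by
    rw [map_zpow, hg, r_one_zpow, ZMod.intCast_zmod_cast]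
  have hgx : Commute g x :=
    commute_of_commute_of_map_eq hker (Commute.self_zpow g _) ((hpow i).trans hx.symm)
  exact commute_of_commute_of_map_eq hker (hgx.zpow_left _).symm ((hpow j).trans hy.symm)

theorem not_commute_of_map_eq_r_of_map_eq_sr (hsurj : Function.Surjective f) {x y : G}
    {i j : ZMod m} (hxc : x ∉ Subgroup.center G) (hx : f x = r i) (hy : f y = sr j) :
    ¬Commute x y := by
  refine fun hxy ↦ hxc (Subgroup.mem_center_iff.mpr fun g ↦ ?_)
  cases hg : f g with
  | r k => exact commute_of_map_eq_r hker hsurj hg hx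
  | sr k =>
    have hgy : f (g * y⁻¹) = r (j - k) := by rw [map_mul, map_inv, hg, hy, inv_sr, sr_mul_sr]
    have hxg : Commute x g := by
      simpa using (commute_of_map_eq_r hker hsurj hx hgy).mul_right hxy
    exact hxg.symm.eq

end

section

variable (hker : f.ker = Subgroup.center G) (hsurj : Function.Surjective f)
include hker hsurj

theorem not_commute_of_map_eq_sr_of_map_eq_sr {x y : G} {i j : ZMod m} (hx : f x = sr i)
    (hy : f y = sr j) (hij : i ≠ j) : ¬Commute x y := by
  intro hxy
  have hxy_map : f (x * y) = r (j - i) := by rw [map_mul, hx, hy, sr_mul_sr]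
  have hxy_center : x * y ∉ Subgroup.center G := by
    rw [← hker, MonoidHom.mem_ker, hxy_map, one_def, r.injEq, sub_eq_zero]
    exact hij.symm
  exact not_commute_of_map_eq_r_of_map_eq_sr hker.le hsurj hxy_center hxy_map hy
    (hxy.mul_left (Commute.refl y))

theorem commute_iff_reflectionIndex_eq {x y : G} (hx : x ∉ Subgroup.center G)
    (hy : y ∉ Subgroup.center G) :
    Commute x y ↔ reflectionIndex (f x) = reflectionIndex (f y) := by
  cases hfx : f x with
  | r i =>
    cases hfy : f y with
    | r j => exact iff_of_true (commute_of_map_eq_r hker.le hsurj hfx hfy) rfl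
    | sr j =>
      exact iff_of_false (not_commute_of_map_eq_r_of_map_eq_sr hker.le hsurj hx hfx hfy)
        (by simp [reflectionIndex])
  | sr i =>
    cases hfy : f y with
    | r j =>
      exact iff_of_false
        (fun h ↦ not_commute_of_map_eq_r_of_map_eq_sr hker.le hsurj hy hfy hfx h.symm)
        (by simp [reflectionIndex])
    | sr j =>
      simp only [reflectionIndex, Option.some_inj]
      refine ⟨fun h ↦ by_contra fun hij ↦
        not_commute_of_map_eq_sr_of_map_eq_sr hker hsurj hfx hfy hij h, ?_⟩
      rintro rfl
      exact commute_of_map_eq hker.le (hfx.trans hfy.symm)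

end

end DihedralGroup

theorem QuotientGroup.card_notMem_fiber {G H : Type*} [Group G] [Group H] {N : Subgroup G}
    [N.Normal] (e : G ⧸ N ≃* H) (p : H → Prop) :
    Nat.card {x : {x : G // x ∉ N} // p (e x)} = Nat.card N * Nat.card {h : H | h ≠ 1 ∧ p h} := by
  have hpre : Nat.card {x : {x : G // x ∉ N} // p (e x)} =
      Nat.card ((QuotientGroup.mk : G → G ⧸ N) ⁻¹' (e ⁻¹' {h | h ≠ 1 ∧ p h})) := by
    refine Nat.card_congr ((Equiv.subtypeSubtypeEquivSubtypeInter (· ∉ N) (p <| e ·)).trans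
      (Equiv.subtypeEquivRight fun x ↦ ?_))
    simp [QuotientGroup.eq_one_iff, and_comm]
  rw [hpre, QuotientGroup.card_preimage_mk,
    Nat.card_preimage_of_injective e.injective (by simp [e.surjective.range_eq])]

namespace commutingGraph

variable {G : Type*} [Group G] {m : ℕ} (e : G ⧸ Subgroup.center G ≃* DihedralGroup m)

theorem adj_iff_reflectionIndex_eq (v w : {x : G // x ∉ Subgroup.center G}) :
    (commutingGraph G).Adj v w ↔ v ≠ w ∧ reflectionIndex (e v) = reflectionIndex (e w) := by
  let f := e.toMonoidHom.comp (QuotientGroup.mk' (Subgroup.center G))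
  have hker : f.ker = Subgroup.center G := by ext x; simp [f]
  have hsurj : Function.Surjective f := e.surjective.comp (QuotientGroup.mk'_surjective _)
  exact and_congr_right fun _ ↦ commute_iff_reflectionIndex_eq hker hsurj v.2 w.2

theorem surjective_reflectionIndex (hm : 2 ≤ m) :
    Function.Surjective fun v : {x : G // x ∉ Subgroup.center G} ↦ reflectionIndex (e v) := by
  have : Fact (1 < m) := ⟨hm⟩
  intro a
  obtain ⟨d, hd, rfl⟩ : ∃ d : DihedralGroup m, d ≠ 1 ∧ reflectionIndex d = a := by
    cases a with
    | none => exact ⟨r 1, by simp [one_def, -r_zero], rfl⟩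
    | some i => exact ⟨sr i, by simp [one_def, -r_zero], rfl⟩
  obtain ⟨x, hx⟩ := (e.surjective.comp (QuotientGroup.mk'_surjective _)) d
  refine ⟨⟨x, fun hxc ↦ hd ?_⟩, congrArg reflectionIndex hx⟩
  rw [← hx, Function.comp_apply, QuotientGroup.mk'_apply, (QuotientGroup.eq_one_iff x).mpr hxc,
    map_one]

theorem card_reflectionIndex_eq_none [NeZero m] :
    Nat.card {v : {x : G // x ∉ Subgroup.center G} // reflectionIndex (e v) = none} =
      Nat.card (Subgroup.center G) * (m - 1) := by
  rw [QuotientGroup.card_notMem_fiber e (reflectionIndex · = none),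
    card_setOf_ne_one_reflectionIndex_eq_none]

theorem card_reflectionIndex_eq_some (i : ZMod m) :
    Nat.card {v : {x : G // x ∉ Subgroup.center G} // reflectionIndex (e v) = some i} =
      Nat.card (Subgroup.center G) := by
  rw [QuotientGroup.card_notMem_fiber e (reflectionIndex · = some i),
    card_setOf_ne_one_reflectionIndex_eq_some, mul_one]

end commutingGraph

theorem Nat.sub_one_add_sub_one_mul_eq {m n : ℕ} (hm : 2 ≤ m) (hn : 1 ≤ n) :
    n * (m - 1) - 1 + (n - 1) * m = (2 * m - 1) * n - m - 1 := by
  rw [Nat.mul_sub_one, Nat.sub_one_mul, Nat.sub_one_mul, mul_assoc, mul_comm m n]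
  have : 2 * n ≤ n * m := by nlinarith
  have : m ≤ n * m := Nat.le_mul_of_pos_left m hn
  omega

theorem commuting_graph_integral_of_central_quotient_dihedral
    (m : ℕ) (hm : 2 ≤ m) (G : Type*) [Group G] [Fintype G] (n : ℕ)
    (hZ : Nonempty ((G ⧸ Subgroup.center G) ≃* DihedralGroup m))
    (hn : Nat.card (Subgroup.center G) = n) :
    commCharpoly G =
        (X + 1) ^ ((2 * m - 1) * n - m - 1) *
          (X - C ((n : ℝ) - 1)) ^ m *
          (X - C (((m : ℝ) - 1) * n - 1)) ∧
      ∀ μ : ℝ, (commCharpoly G).IsRoot μ → ∃ k : ℤ, μ = (k : ℝ) := by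
  classical
  obtain ⟨e⟩ := hZ
  have : NeZero m := ⟨by omega⟩
  have hpoly : commCharpoly G = (X + 1) ^ ((2 * m - 1) * n - m - 1) *
      (X - C ((n : ℝ) - 1)) ^ m * (X - C (((m : ℝ) - 1) * n - 1)) := by
    rw [commCharpoly, SimpleGraph.charpoly_adjMatrix_of_adj_iff _ _
      (commutingGraph.adj_iff_reflectionIndex_eq e),
      Finset.image_univ_of_surjective (commutingGraph.surjective_reflectionIndex e hm),
      Fintype.prod_option]
    simp only [commutingGraph.card_reflectionIndex_eq_none, hn,
      commutingGraph.card_reflectionIndex_eq_some, Finset.prod_const, Finset.card_univ, ZMod.card]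
    rw [← Nat.sub_one_add_sub_one_mul_eq hm (hn ▸ Nat.card_pos), pow_add, pow_mul, mul_pow]
    push_cast [Nat.cast_sub (by omega : 1 ≤ m)]
    rw [mul_comm (n : ℝ)]
    ring
  refine ⟨hpoly, fun μ hμ ↦ ?_⟩
  simp only [hpoly, IsRoot, eval_mul, eval_pow, eval_add, eval_sub, eval_X, eval_C, eval_one,
    mul_eq_zero] at hμ
  rcases hμ with (h | h) | h
  · exact ⟨-1, by push_cast; linarith [eq_zero_of_pow_eq_zero h]⟩
  · exact ⟨n - 1, by push_cast; linarith [eq_zero_of_pow_eq_zero h]⟩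
  · exact ⟨(m - 1) * n - 1, by push_cast; linarith⟩
end

section
/- Let m ≥ 2 and let G = Q_{4m} be the dicyclic (generalized quaternion) group of order 4m (Mathlib's QuaternionGroup m). Then the characteristic polynomial of the adjacency matrix of the commuting graph Γ_G (over the reals) equals (X + 1)^(3m − 3) · (X − 1)^m · (X − (2m − 3)); in particular G is commuting integral. -/
open Polynomial

/-!
In `Q_{4m}` the non-central elements are the `a i` with `i ≠ 0, m`, which pairwise commute, and
the `2m` elements `xa i`, which commute with no `a i` and, among themselves, only in the pairs
`{xa i, xa (i + m)}`. Hence the commuting graph is `K_{2m-2} ⊔ m K₂`.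
The adjacency matrix of `K_N` is `J - 1` with `J` of rank one, giving `(X + 1)^(N-1) (X - (N-1))`.
A perfect matching has an adjacency matrix `A` with `A² = 1`, conjugate to `-A` by the `±1`
diagonal matrix of a 2-colouring; so its characteristic polynomial `p` satisfies
`p = charpoly (-A)` and `p² = det ((X - A) (X + A)) = (X² - 1)^(2m)`.
Being monic, `p = (X² - 1)^m`.
-/

theorem Polynomial.Monic.eq_of_mul_self_eq {R : Type*} [CommRing R] [IsDomain R] [NeZero (2 : R)]
    {p q : R[X]} (hp : p.Monic) (hq : q.Monic) (h : p * p = q * q) : p = q := by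
  have : (p - q) * (p + q) = 0 := by linear_combination h
  rcases mul_eq_zero.mp this with h | h
  · exact sub_eq_zero.mp h
  · have : (1 : R) = -1 := by
      simpa [eq_neg_of_add_eq_zero_left h, hq.leadingCoeff] using hp.leadingCoeff.symm
    exact absurd (by linear_combination this) (two_ne_zero (α := R))

namespace Matrix

variable {n R : Type*} [Fintype n] [DecidableEq n] [CommRing R]

theorem charpoly_mul_charpoly_neg_of_mul_self_eq_one {B : Matrix n n R} (hB : B * B = 1) :
    B.charpoly * (-B).charpoly = (X ^ 2 - 1) ^ Fintype.card n := by
  have hcomm : Commute (scalar n (X : R[X])) (C.mapMatrix B) :=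
    scalar_commute _ (fun _ => Commute.all _ _) _
  have hsq : C.mapMatrix B * C.mapMatrix B = 1 := by rw [← map_mul, hB, map_one]
  have : charmatrix B * charmatrix (-B) = scalar n (X ^ 2 - 1 : R[X]) := by
    rw [charmatrix, charmatrix, map_neg, sub_neg_eq_add, ← hcomm.mul_self_sub_mul_self_eq', hsq,
      sq, map_sub, map_mul, map_one]
  rw [charpoly, charpoly, ← det_mul, this, scalar_apply, det_diagonal, Finset.prod_const,
    Finset.card_univ]

theorem charpoly_eq_of_mul_self_eq_one_of_conj_neg [IsDomain R] [NeZero (2 : R)]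
    {B D : Matrix n n R} (hB : B * B = 1) (hD : D * D = 1) (hDB : D * B * D = -B) {k : ℕ}
    (hk : Fintype.card n = 2 * k) : B.charpoly = (X ^ 2 - 1) ^ k := by
  have hneg : (-B).charpoly = B.charpoly := by
    rw [← hDB, mul_assoc, charpoly_mul_comm, mul_assoc, hD, mul_one]
  have hmonic : ((X ^ 2 - 1 : R[X]) ^ k).Monic := by
    simpa using (monic_X_pow_sub_C (1 : R) two_ne_zero).pow k
  refine B.charpoly_monic.eq_of_mul_self_eq hmonic ?_
  rw [← pow_add, ← two_mul, ← hk, ← charpoly_mul_charpoly_neg_of_mul_self_eq_one hB, hneg]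

end Matrix

namespace SimpleGraph

section Sum

variable {V W R : Type*} {G : SimpleGraph V} {H : SimpleGraph W} [DecidableRel G.Adj]
  [DecidableRel H.Adj]

theorem adjMatrix_sum [Zero R] [One R] [DecidableRel (G ⊕g H).Adj] :
    (G ⊕g H).adjMatrix R = Matrix.fromBlocks (G.adjMatrix R) 0 0 (H.adjMatrix R) := by
  ext (v | v) (w | w) <;> simp

variable [Fintype V] [DecidableEq V] [Fintype W] [DecidableEq W] [CommRing R]

theorem Iso.charpoly_adjMatrix (e : G ≃g H) :
    (G.adjMatrix R).charpoly = (H.adjMatrix R).charpoly := by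
  rw [← Matrix.charpoly_reindex e.toEquiv]
  congr 1
  ext v w
  simp only [Matrix.reindex_apply, Matrix.submatrix_apply, adjMatrix_apply]
  exact if_congr e.symm.map_adj_iff rfl rfl

theorem charpoly_adjMatrix_sum [DecidableRel (G ⊕g H).Adj] :
    ((G ⊕g H).adjMatrix R).charpoly = (G.adjMatrix R).charpoly * (H.adjMatrix R).charpoly := by
  rw [adjMatrix_sum, Matrix.charpoly_fromBlocks_zero₁₂]

theorem charpoly_adjMatrix_top [Nonempty V] :
    ((⊤ : SimpleGraph V).adjMatrix R).charpoly =
      (X + 1) ^ (Fintype.card V - 1) * (X - C ((Fintype.card V : R) - 1)) := by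
  have : (⊤ : SimpleGraph V).adjMatrix R = Matrix.vecMulVec 1 1 - Matrix.scalar V 1 := by
    ext v w
    by_cases h : v = w <;> simp [h]
  obtain ⟨k, hk⟩ : ∃ k, Fintype.card V = k + 1 := Nat.exists_eq_add_one.mpr Fintype.card_pos
  rw [this, Matrix.charpoly_sub_scalar, Matrix.charpoly_vecMulVec]
  simp [hk, pow_succ, smul_eq_C_mul]
  ring

end Sum

section PerfectMatching

variable {V R : Type*} [Fintype V] {G : SimpleGraph V} [DecidableRel G.Adj]

theorem eq_of_adj_of_adj_of_isRegularOfDegree_one (hG : G.IsRegularOfDegree 1) {v w₁ w₂ : V}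
    (h₁ : G.Adj v w₁) (h₂ : G.Adj v w₂) : w₁ = w₂ :=
  Finset.card_le_one.mp (hG v).le _ (by simpa) _ (by simpa)

theorem isBipartite_of_isRegularOfDegree_one (hG : G.IsRegularOfDegree 1) : G.IsBipartite := by
  let e := Fintype.equivFin V
  have key : ∀ {v w}, G.Adj v w → ((∃ u, G.Adj v u ∧ e v < e u) ↔ e v < e w) := fun hvw =>
    ⟨fun ⟨_, hvu, hlt⟩ => eq_of_adj_of_adj_of_isRegularOfDegree_one hG hvu hvw ▸ hlt,
      fun h => ⟨_, hvw, h⟩⟩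
  -- colour `v` by whether its unique neighbour comes later in an enumeration of `V`
  refine ⟨Coloring.mk (fun v => if ∃ u, G.Adj v u ∧ e v < e u then 0 else 1)
    fun {v w} hvw => ?_⟩
  have hne : e v ≠ e w := e.injective.ne hvw.ne
  simp only [key hvw, key hvw.symm]
  split_ifs <;> omega

variable [DecidableEq V]

theorem adjMatrix_mul_self_of_isRegularOfDegree_one [NonAssocSemiring R]
    (hG : G.IsRegularOfDegree 1) : G.adjMatrix R * G.adjMatrix R = 1 := by
  ext v w
  obtain ⟨u, hu⟩ := Finset.card_eq_one.mp (hG v)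
  have huv : G.Adj u v :=
    (by simpa using hu.ge (Finset.mem_singleton_self u) : G.Adj v u).symm
  have : G.Adj u w ↔ v = w :=
    ⟨eq_of_adj_of_adj_of_isRegularOfDegree_one hG huv, fun h => h ▸ huv⟩
  rw [adjMatrix_mul_apply, hu, Finset.sum_singleton, adjMatrix_apply, Matrix.one_apply]
  exact if_congr this rfl rfl

theorem charpoly_adjMatrix_of_isRegularOfDegree_one [CommRing R] [IsDomain R] [NeZero (2 : R)]
    (hG : G.IsRegularOfDegree 1) :
    (G.adjMatrix R).charpoly = (X ^ 2 - 1) ^ (Fintype.card V / 2) := by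
  obtain ⟨c⟩ := isBipartite_of_isRegularOfDegree_one hG
  let D : Matrix V V R := Matrix.diagonal fun v => if c v = 0 then 1 else -1
  have hD : D * D = 1 := by
    rw [Matrix.diagonal_mul_diagonal, ← Matrix.diagonal_one]
    congr 1
    ext v
    split_ifs <;> simp
  have hDB : D * G.adjMatrix R * D = -G.adjMatrix R := by
    ext v w
    simp only [D, Matrix.diagonal_mul, Matrix.mul_diagonal, Matrix.neg_apply, adjMatrix_apply]
    by_cases hvw : G.Adj v w
    · have := c.valid hvw
      split_ifs <;> first | omega | simp
    · simp [hvw]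
  have hcard : Fintype.card V = 2 * (Fintype.card V / 2) := by
    have := G.sum_degrees_eq_twice_card_edges
    simp only [hG _, Finset.sum_const, Finset.card_univ, smul_eq_mul, mul_one] at this
    omega
  exact Matrix.charpoly_eq_of_mul_self_eq_one_of_conj_neg
    (adjMatrix_mul_self_of_isRegularOfDegree_one hG) hD hDB hcard

end PerfectMatching

end SimpleGraph

namespace ZMod

variable {n : ℕ} [NeZero n]

theorem val_natCast_two_mul : (n : ZMod (2 * n)).val = n :=
  val_natCast_of_lt (by linarith [NeZero.pos n])

theorem natCast_ne_zero_two_mul : (n : ZMod (2 * n)) ≠ 0 := fun h =>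
  NeZero.ne n (by rw [← val_natCast_two_mul (n := n), h, val_zero])

theorem neg_eq_self_iff_two_mul (x : ZMod (2 * n)) : -x = x ↔ x = 0 ∨ x = n := by
  rw [neg_eq_self_iff]
  refine or_congr_right ⟨fun h => val_injective _ ?_, fun h => by rw [h, val_natCast_two_mul]⟩
  rw [val_natCast_two_mul]
  omega

end ZMod

namespace SimpleGraph

theorem circulantGraph_natCast_two_mul_adj_iff {n : ℕ} [NeZero n] {i j : ZMod (2 * n)} :
    (circulantGraph {(n : ZMod (2 * n))}).Adj i j ↔ j = i + n := by
  have hneg : -(n : ZMod (2 * n)) = n := (ZMod.neg_eq_self_iff_two_mul _).mpr (Or.inr rfl)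
  rw [circulantGraph_adj, Set.mem_singleton_iff, Set.mem_singleton_iff, ← neg_sub j i,
    neg_eq_iff_eq_neg, hneg, or_self, sub_eq_iff_eq_add', and_iff_right_iff_imp]
  rintro rfl
  exact (add_ne_left.mpr ZMod.natCast_ne_zero_two_mul).symm

theorem isRegularOfDegree_circulantGraph_natCast_two_mul {n : ℕ} [NeZero n] :
    (circulantGraph {(n : ZMod (2 * n))}).IsRegularOfDegree 1 := by
  intro i
  rw [← card_neighborFinset_eq_degree, Finset.card_eq_one]
  refine ⟨i + n, Finset.ext fun j => ?_⟩
  rw [mem_neighborFinset, circulantGraph_natCast_two_mul_adj_iff, Finset.mem_singleton]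

end SimpleGraph

theorem commutingGraph_adj_iff {G : Type*} [Group G] {x y : {x : G // x ∉ Subgroup.center G}} :
    (commutingGraph G).Adj x y ↔ x ≠ y ∧ Commute (x : G) y :=
  Iff.rfl

namespace QuaternionGroup

variable {n : ℕ}

theorem commute_a_a (i j : ZMod (2 * n)) : Commute (a i) (a j) := by
  rw [Commute, SemiconjBy, a_mul_a, a_mul_a, add_comm]

theorem commute_a_xa_iff (i j : ZMod (2 * n)) : Commute (a i) (xa j) ↔ -i = i := by
  rw [Commute, SemiconjBy, a_mul_xa, xa_mul_a, xa.injEq]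
  constructor <;> intro h <;> linear_combination h

theorem commute_xa_xa_iff [NeZero n] (i j : ZMod (2 * n)) :
    Commute (xa i) (xa j) ↔ j = i ∨ j = i + n := by
  rw [Commute, SemiconjBy, xa_mul_xa, xa_mul_xa, a.injEq]
  trans -(j - i) = j - i
  · constructor <;> intro h <;> linear_combination -h
  rw [ZMod.neg_eq_self_iff_two_mul, sub_eq_zero, sub_eq_iff_eq_add']

theorem a_mem_center_iff (i : ZMod (2 * n)) :
    a i ∈ Subgroup.center (QuaternionGroup n) ↔ -i = i := by
  rw [Subgroup.mem_center_iff]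
  refine ⟨fun h => (commute_a_xa_iff i 0).mp (h (xa 0)).symm, fun h g => ?_⟩
  cases g with
  | a j => exact commute_a_a j i
  | xa j => exact ((commute_a_xa_iff i j).mpr h).eq.symm

theorem xa_notMem_center (hn : n ≠ 1) (i : ZMod (2 * n)) :
    xa i ∉ Subgroup.center (QuaternionGroup n) := by
  intro h
  have h2 : ((2 : ℕ) : ZMod (2 * n)) = 0 := by
    have := (commute_a_xa_iff 1 i).mp (Subgroup.mem_center_iff.mp h (a 1))
    push_cast
    linear_combination -this
  rw [ZMod.natCast_eq_zero_iff] at h2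
  exact hn (Nat.dvd_one.mp ((Nat.mul_dvd_mul_iff_left two_pos).mp (by simpa using h2)))

theorem card_a_notMem_center [NeZero n] :
    Fintype.card {i : ZMod (2 * n) // a i ∉ Subgroup.center (QuaternionGroup n)} = 2 * n - 2 := by
  let s : Finset (ZMod (2 * n)) := {0, (n : ZMod (2 * n))}
  rw [Fintype.card_congr (Equiv.subtypeEquivRight (q := (· ∉ s)) fun i => by
    simp [s, a_mem_center_iff, ZMod.neg_eq_self_iff_two_mul]), Fintype.card_subtype_compl,
    Fintype.card_coe, Finset.card_pair ZMod.natCast_ne_zero_two_mul.symm, ZMod.card]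

def nonCentralEquiv (hn : n ≠ 1) :
    {i : ZMod (2 * n) // a i ∉ Subgroup.center (QuaternionGroup n)} ⊕ ZMod (2 * n) ≃
      {x : QuaternionGroup n // x ∉ Subgroup.center (QuaternionGroup n)} where
  toFun := Sum.elim (fun i => ⟨a i, i.2⟩) (fun j => ⟨xa j, xa_notMem_center hn j⟩)
  invFun
    | ⟨a i, h⟩ => .inl ⟨i, h⟩
    | ⟨xa j, _⟩ => .inr j
  left_inv := by rintro (_ | _) <;> rfl
  right_inv := by rintro ⟨_ | _, _⟩ <;> rfl

def commutingGraphIso [NeZero n] (hn : n ≠ 1) :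
    (⊤ : SimpleGraph {i : ZMod (2 * n) // a i ∉ Subgroup.center (QuaternionGroup n)}) ⊕g
      SimpleGraph.circulantGraph {(n : ZMod (2 * n))} ≃g commutingGraph (QuaternionGroup n) where
  toEquiv := nonCentralEquiv hn
  map_rel_iff' := by
    rintro (⟨i, hi⟩ | i) (⟨j, hj⟩ | j) <;>
      simp only [nonCentralEquiv, Equiv.coe_fn_mk, Sum.elim_inl, Sum.elim_inr,
        commutingGraph_adj_iff, ne_eq, Subtype.mk.injEq, a.injEq, xa.injEq, reduceCtorEq,
        not_false_eq_true, true_and, and_true, iff_false, SimpleGraph.sum_adj, SimpleGraph.top_adj,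
        SimpleGraph.circulantGraph_natCast_two_mul_adj_iff, commute_a_a, commute_a_xa_iff,
        commute_xa_xa_iff]
    · exact mt (a_mem_center_iff i).mpr hi
    · rw [Commute.symm_iff, commute_a_xa_iff]
      exact mt (a_mem_center_iff j).mpr hj
    · refine ⟨fun h => h.2.resolve_left (Ne.symm h.1), fun h => ⟨?_, Or.inr h⟩⟩
      exact h ▸ (add_ne_left.mpr ZMod.natCast_ne_zero_two_mul).symm

theorem charpoly_adjMatrix_commutingGraph [NeZero n] (hn : 2 ≤ n)
    [DecidableEq {x : QuaternionGroup n // x ∉ Subgroup.center (QuaternionGroup n)}]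
    [Fintype {x : QuaternionGroup n // x ∉ Subgroup.center (QuaternionGroup n)}]
    [DecidableRel (commutingGraph (QuaternionGroup n)).Adj] :
    ((commutingGraph (QuaternionGroup n)).adjMatrix ℝ).charpoly =
      (X + 1) ^ (3 * n - 3) * (X - 1) ^ n * (X - C (2 * (n : ℝ) - 3)) := by
  classical
  have : Nonempty {i : ZMod (2 * n) // a i ∉ Subgroup.center (QuaternionGroup n)} :=
    Fintype.card_pos_iff.mp (by rw [card_a_notMem_center]; omega)
  rw [← (commutingGraphIso (by omega : n ≠ 1)).charpoly_adjMatrix,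
    SimpleGraph.charpoly_adjMatrix_sum, SimpleGraph.charpoly_adjMatrix_top,
    SimpleGraph.charpoly_adjMatrix_of_isRegularOfDegree_one
      SimpleGraph.isRegularOfDegree_circulantGraph_natCast_two_mul,
    card_a_notMem_center, ZMod.card, Nat.mul_div_cancel_left n two_pos]
  have hexp : 3 * n - 3 = 2 * n - 2 - 1 + n := by omega
  have hroot : ((2 * n - 2 : ℕ) : ℝ) - 1 = 2 * n - 3 := by
    rw [Nat.cast_sub (by omega)]
    push_cast
    ring
  rw [hroot, hexp, pow_add, show (X ^ 2 - 1 : ℝ[X]) = (X - 1) * (X + 1) by ring, mul_pow]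
  ring

theorem commCharpoly_eq [NeZero n] (hn : 2 ≤ n) :
    commCharpoly (QuaternionGroup n) =
      (X + 1) ^ (3 * n - 3) * (X - 1) ^ n * (X - C (2 * (n : ℝ) - 3)) := by
  classical
  rw [commCharpoly]
  convert charpoly_adjMatrix_commutingGraph hn

end QuaternionGroup

theorem commuting_integral_quaternion
    (m : ℕ) [NeZero m] (hm : 2 ≤ m) :
    commCharpoly (QuaternionGroup m) =
        (X + 1) ^ (3 * m - 3) * (X - 1) ^ m * (X - C (2 * (m : ℝ) - 3)) ∧
      ∀ μ : ℝ, (commCharpoly (QuaternionGroup m)).IsRoot μ → ∃ k : ℤ, μ = (k : ℝ) := by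
  refine ⟨QuaternionGroup.commCharpoly_eq hm, fun μ hμ => ?_⟩
  rw [QuaternionGroup.commCharpoly_eq hm] at hμ
  simp only [IsRoot, eval_mul, eval_pow, eval_add, eval_sub, eval_X, eval_one, eval_C,
    mul_eq_zero, pow_eq_zero_iff', sub_eq_zero] at hμ
  rcases hμ with (⟨h, -⟩ | ⟨h, -⟩) | h
  · exact ⟨-1, by push_cast; linarith⟩
  · exact ⟨1, by exact_mod_cast h⟩
  · exact ⟨2 * m - 3, by push_cast; exact h⟩
end
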